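/- Let N be a bounded normal operator on H with spectrum σ = {0} ∪ {λₙ : n ≥ 1}, λₙ > 0, λₙ → 0, and let T = [[0, N^{1/2}], [0, N]] on H ⊕ H. Then for each fixed n, the norm-closed algebra A_{λₙI − T} generated by positive powers of λₙI − T has a bounded approximate identity. -/

import Mathlib

open Filter

open ContinuousLinearMap in
/-- The block operator `[[A, B], [C, D]]` on `H ⊕ H`. -/
noncomputable def blockOp {H : Type*} [NormedAddCommGroup H] [InnerProductSpace ℂ H]
    (A B C D : H →L[ℂ] H) : (H × H) →L[ℂ] (H × H) :=
  (A.comp (fst ℂ H H) + B.comp (snd ℂ H H)).prod (C.comp (fst ℂ H H) + D.comp (snd ℂ H H))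

/-!
Write `S = λₙ I − T = [[λₙ, −sqrtN], [0, D]]` with `D = λₙ I − N`. The spectrum of `N`
accumulates only at `0`, so `0` is an isolated point of the real spectrum of the normal operator
`D`. Hence for small `a > 0` both `|1 − aλₙ²|` and `|1 − a w²|`, `0 ≠ w ∈ σ(D)`, are at most some
`ρ < 1`, and `B = 1 − a S²` satisfies `∑ ‖Bᵏ S‖ < ∞` (the corner entry of `Bᵏ S` grows at most
like `k ρᵏ`). Then `Eₖ = 1 − Bᵏ = a (∑_{j<k} Bʲ) S²` lies in the span of the positive powers of
`S`, converges to some `E`, and `Eₖ S = S − Bᵏ S → S` gives `E S = S`. So `E` is a left unit of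
the closed algebra generated by `S`, and the constant sequence `E` is a bounded approximate
identity.
-/

open Finset Topology

theorem summable_of_le_mul_add {c b : ℕ → ℝ} {ρ : ℝ} (hc : ∀ k, 0 ≤ c k) (hb : ∀ k, 0 ≤ b k)
    (hbs : Summable b) (hρ : ρ < 1) (hrec : ∀ k, c (k + 1) ≤ ρ * c k + b k) : Summable c := by
  refine summable_of_sum_range_le hc (c := (c 0 + ∑' k, b k) / (1 - ρ)) fun n => ?_
  rw [le_div_iff₀ (by linarith)]
  have hshift : ∑ k ∈ range n, c (k + 1) ≤ ρ * ∑ k ∈ range n, c k + ∑' k, b k := by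
    rw [mul_sum]
    calc ∑ k ∈ range n, c (k + 1) ≤ ∑ k ∈ range n, (ρ * c k + b k) := sum_le_sum fun k _ => hrec k
      _ ≤ _ := by rw [sum_add_distrib]; gcongr; exact hbs.sum_le_tsum _ fun k _ => hb k
  have hmono : ∑ k ∈ range n, c k ≤ c 0 + ∑ k ∈ range n, c (k + 1) := by
    rw [add_comm, ← sum_range_succ', sum_range_succ]
    linarith [hc n]
  linarith

theorem abs_one_sub_mul_sq_le {a δ W x : ℝ} (ha : 0 ≤ a) (haW : a * W ^ 2 ≤ 1) (hδ : 0 ≤ δ)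
    (hδx : δ ≤ |x|) (hxW : |x| ≤ W) : |1 - a * x ^ 2| ≤ 1 - a * δ ^ 2 := by
  have hlow : δ ^ 2 ≤ x ^ 2 := by rw [← sq_abs x]; gcongr
  have hup : x ^ 2 ≤ W ^ 2 := by rw [← sq_abs x]; gcongr
  rw [abs_of_nonneg (by nlinarith)]
  linarith [mul_le_mul_of_nonneg_left hlow ha]

theorem Filter.Tendsto.exists_pos_forall_eq_or_le_dist {X : Type*} [MetricSpace X] {u : ℕ → X}
    {x y : X} (hu : Tendsto u atTop (𝓝 y)) (hxy : x ≠ y) :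
    ∃ δ > 0, ∀ z ∈ insert y (Set.range u), z = x ∨ δ ≤ dist x z := by
  classical
  -- replacing the terms equal to `x` by `y` gives a compact set avoiding `x`
  set v : ℕ → X := fun m => if u m = x then y else u m
  have hv : Tendsto v atTop (𝓝 y) :=
    hu.congr' <| (hu.eventually_ne hxy.symm).mono fun m hm => (if_neg hm).symm
  have hx : x ∉ insert y (Set.range v) := by
    rintro (h | ⟨m, hm⟩)
    · exact hxy h
    · by_cases hum : u m = x
      · exact hxy (by simpa [v, hum] using hm.symm)
      · simp [v, hum] at hm
  have hK := hv.isCompact_insert_range.isClosed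
  refine ⟨Metric.infDist x _, (hK.notMem_iff_infDist_pos ⟨y, .inl rfl⟩).mp hx, ?_⟩
  rintro z (rfl | ⟨m, rfl⟩)
  · exact .inr (Metric.infDist_le_dist_of_mem (.inl rfl))
  · by_cases hum : u m = x
    · exact .inl hum
    · exact .inr (Metric.infDist_le_dist_of_mem (.inr ⟨m, if_neg hum⟩))

section PosPowSpan

variable (𝕜 : Type*) {A : Type*} [NormedField 𝕜] [NormedRing A] [NormedAlgebra 𝕜 A]

/-- Its closure is the algebra `A_S` of the paper. -/
def posPowSpan (S : A) : Submodule 𝕜 A :=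
  Submodule.span 𝕜 {X | ∃ m : ℕ, 1 ≤ m ∧ X = S ^ m}

variable {𝕜}

theorem self_mem_posPowSpan (S : A) : S ∈ posPowSpan 𝕜 S :=
  Submodule.subset_span ⟨1, le_rfl, (pow_one S).symm⟩

theorem mul_mem_posPowSpan {S x y : A} (hx : x ∈ posPowSpan 𝕜 S) (hy : y ∈ posPowSpan 𝕜 S) :
    x * y ∈ posPowSpan 𝕜 S := by
  have hxy := Submodule.mul_mem_mul hx hy
  rw [posPowSpan, Submodule.span_mul_span] at hxy
  refine Submodule.span_mono ?_ hxy
  rintro _ ⟨_, ⟨m, hm, rfl⟩, _, ⟨m', -, rfl⟩, rfl⟩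
  exact ⟨m + m', by omega, (pow_add S m m').symm⟩

theorem mul_eq_self_of_mem_closure_posPowSpan {S E x : A} (hE : E * S = S)
    (hx : x ∈ closure (posPowSpan 𝕜 S : Set A)) : E * x = x := by
  refine closure_minimal (fun y hy => ?_) (isClosed_eq (continuous_const_mul E) continuous_id) hx
  induction hy using Submodule.span_induction with
  | mem y hy =>
    obtain ⟨m, hm, rfl⟩ := hy
    obtain ⟨j, rfl⟩ := Nat.exists_eq_add_of_le' hm
    change E * S ^ (j + 1) = S ^ (j + 1)
    rw [pow_succ', ← mul_assoc, hE]
  | zero => exact mul_zero E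
  | add y z _ _ hy hz => exact (mul_add E y z).trans (congrArg₂ _ hy hz)
  | smul c y _ hy => exact (mul_smul_comm c E y).trans (congrArg _ hy)

theorem exists_mem_closure_posPowSpan_mul_eq_self [CompleteSpace A] (S : A) (a : 𝕜)
    (h : Summable fun k => ‖(1 - a • (S * S)) ^ k * S‖) :
    ∃ E ∈ closure (posPowSpan 𝕜 S : Set A), E * S = S := by
  set B := 1 - a • (S * S)
  have hS := self_mem_posPowSpan (𝕜 := 𝕜) S
  have hmem : ∀ k, B ^ k * S ∈ posPowSpan 𝕜 S := by
    intro k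
    induction k with
    | zero => simpa using hS
    | succ k ih =>
      rw [pow_succ', mul_assoc, sub_mul, one_mul, smul_mul_assoc]
      exact sub_mem ih (Submodule.smul_mem _ a (mul_mem_posPowSpan (mul_mem_posPowSpan hS hS) ih))
  have hpartial : ∀ n, ∑ k ∈ range n, B ^ k * S * (a • S) = 1 - B ^ n := by
    intro n
    have h1B : S * a • S = 1 - B := by rw [mul_smul_comm, sub_sub_cancel]
    rw [← sum_mul, ← sum_mul, mul_assoc, h1B, geom_sum_mul_neg]
  obtain ⟨F, hF⟩ := Summable.of_norm h
  have hlim := (hF.mul_right (a • S)).tendsto_sum_nat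
  simp only [hpartial] at hlim
  refine ⟨F * (a • S), mem_closure_of_tendsto hlim (.of_forall fun n => ?_), ?_⟩
  · rw [← hpartial]
    exact sum_mem fun k _ => mul_mem_posPowSpan (hmem k) (Submodule.smul_mem _ a hS)
  · have hBS : Tendsto (fun n => B ^ n * S) atTop (𝓝 0) :=
      tendsto_zero_iff_norm_tendsto_zero.mpr h.tendsto_atTop_zero
    refine tendsto_nhds_unique (hlim.mul_const S) ?_
    simpa [sub_mul] using tendsto_const_nhds.sub hBS

end PosPowSpan

theorem norm_pow_one_sub_smul_mul_self_mul_le {A : Type*} [CStarAlgebra A] {D : A}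
    [IsStarNormal D] {a δ W : ℝ} (ha : 0 ≤ a) (haW : a * W ^ 2 ≤ 1) (hδ : 0 ≤ δ) (hδW : δ ≤ W)
    (hDW : ‖D‖ ≤ W) (hspec : ∀ w ∈ spectrum ℂ D, ∃ x : ℝ, w = x ∧ (x = 0 ∨ δ ≤ |x|)) (k : ℕ) :
    ‖(1 - (a : ℂ) • (D * D)) ^ k * D‖ ≤ W * (1 - a * δ ^ 2) ^ k := by
  have hW : 0 ≤ W := hδ.trans hδW
  have hρ : 0 ≤ 1 - a * δ ^ 2 := by nlinarith [pow_le_pow_left₀ hδ hδW 2]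
  rcases subsingleton_or_nontrivial A with _ | _
  · rw [Subsingleton.elim (_ * D) 0, norm_zero]
    positivity
  have hcfc : (1 - (a : ℂ) • (D * D)) ^ k * D = cfc (fun w : ℂ => (1 - a * (w * w)) ^ k * w) D := by
    rw [cfc_mul (fun w : ℂ => (1 - a * (w * w)) ^ k) (fun w => w) D,
      cfc_pow (fun w : ℂ => 1 - a * (w * w)) k D, cfc_sub (fun _ : ℂ => 1) (fun w => a * (w * w)) D,
      cfc_const_one ℂ D, cfc_const_mul (a : ℂ) (fun w => w * w) D,
      cfc_mul (fun w : ℂ => w) (fun w => w) D, cfc_id' ℂ D]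
  rw [hcfc]
  refine norm_cfc_le (by positivity) fun w hw => ?_
  obtain ⟨x, rfl, hx⟩ := hspec w hw
  have hxW : |x| ≤ W := (Complex.norm_real x ▸ spectrum.norm_le_norm_of_mem hw).trans hDW
  rcases hx with rfl | hδx
  · simpa using mul_nonneg hW (pow_nonneg hρ k)
  · have hreal : (1 - (a : ℂ) * (x * x)) ^ k * x = (((1 - a * x ^ 2) ^ k * x : ℝ) : ℂ) := by
      push_cast; ring
    rw [hreal, Complex.norm_real, Real.norm_eq_abs, abs_mul, abs_pow, mul_comm]
    have hcontract := abs_one_sub_mul_sq_le ha haW hδ hδx hxW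
    exact mul_le_mul hxW (pow_le_pow_left₀ (abs_nonneg _) hcontract k) (by positivity) hW

theorem exists_forall_spectrum_sub_eq_zero_or_le_abs {A : Type*} [Ring A] [Algebra ℂ A] {N : A}
    {l : ℕ → ℝ} (hlim : Tendsto l atTop (𝓝 0))
    (hspec : spectrum ℂ N = insert 0 (Set.range fun m => (l m : ℂ))) {μ : ℝ} (hμ : μ ≠ 0) :
    ∃ δ > 0, δ ≤ |μ| ∧
      ∀ w ∈ spectrum ℂ ((μ : ℂ) • 1 - N), ∃ x : ℝ, w = x ∧ (x = 0 ∨ δ ≤ |x|) := by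
  have hlimC : Tendsto (fun m => (l m : ℂ)) atTop (𝓝 0) :=
    (Complex.continuous_ofReal.tendsto' 0 0 Complex.ofReal_zero).comp hlim
  obtain ⟨δ, hδ, hfar⟩ :=
    hlimC.exists_pos_forall_eq_or_le_dist (x := (μ : ℂ)) (by exact_mod_cast hμ)
  refine ⟨δ, hδ, ?_, fun w hw => ?_⟩
  · rcases hfar 0 (Set.mem_insert 0 _) with h | h
    · exact absurd h.symm (by exact_mod_cast hμ)
    · simpa using h
  · rw [← Algebra.algebraMap_eq_smul_one, ← spectrum.singleton_sub_eq, hspec] at hw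
    obtain ⟨_, rfl, z, hz, rfl⟩ := hw
    obtain ⟨x, rfl⟩ : ∃ x : ℝ, z = x := by
      rcases hz with rfl | ⟨m, rfl⟩
      exacts [⟨0, by simp⟩, ⟨l m, rfl⟩]
    refine ⟨μ - x, by push_cast; rfl, ?_⟩
    rcases hfar _ hz with h | h
    · exact .inl (sub_eq_zero.mpr (by exact_mod_cast h.symm))
    · exact .inr (by simpa [Complex.dist_eq, ← Complex.ofReal_sub] using h)

section Block

variable {H : Type*} [NormedAddCommGroup H] [InnerProductSpace ℂ H]

theorem blockOp_apply (A B C D : H →L[ℂ] H) (z : H × H) :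
    blockOp A B C D z = (A z.1 + B z.2, C z.1 + D z.2) := rfl

theorem blockOp_mul_blockOp (A X D A' Y D' : H →L[ℂ] H) :
    blockOp A X 0 D * blockOp A' Y 0 D' = blockOp (A * A') (A * Y + X * D') 0 (D * D') := by
  ext z <;> simp [blockOp_apply]

theorem blockOp_one : blockOp (1 : H →L[ℂ] H) 0 0 1 = 1 := by
  ext z <;> simp [blockOp_apply]

theorem smul_blockOp (c : ℂ) (A X D : H →L[ℂ] H) :
    c • blockOp A X 0 D = blockOp (c • A) (c • X) 0 (c • D) := by
  ext z <;> simp [blockOp_apply]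

theorem blockOp_sub_blockOp (A X D A' Y D' : H →L[ℂ] H) :
    blockOp A X 0 D - blockOp A' Y 0 D' = blockOp (A - A') (X - Y) 0 (D - D') := by
  ext z <;> simp [blockOp_apply]

theorem norm_blockOp_le (A X D : H →L[ℂ] H) : ‖blockOp A X 0 D‖ ≤ ‖A‖ + ‖X‖ + ‖D‖ := by
  refine ContinuousLinearMap.opNorm_le_bound _ (by positivity) fun z => ?_
  have hA := A.le_opNorm_of_le (norm_fst_le z)
  have hX := X.le_opNorm_of_le (norm_snd_le z)
  have hD := D.le_opNorm_of_le (norm_snd_le z)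
  rw [blockOp_apply, Prod.norm_def, zero_apply, zero_add]
  refine max_le ((norm_add_le _ _).trans ?_) ?_ <;>
    nlinarith [norm_nonneg z, norm_nonneg A, norm_nonneg X, norm_nonneg D]

noncomputable def powMulCorner (A X D Y D' : H →L[ℂ] H) : ℕ → H →L[ℂ] H
  | 0 => Y
  | k + 1 => A * powMulCorner A X D Y D' k + X * (D ^ k * D')

theorem blockOp_pow_mul_blockOp (A X D A' Y D' : H →L[ℂ] H) (k : ℕ) :
    blockOp A X 0 D ^ k * blockOp A' Y 0 D' =
      blockOp (A ^ k * A') (powMulCorner A X D Y D' k) 0 (D ^ k * D') := by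
  induction k with
  | zero => simp [powMulCorner]
  | succ k ih =>
    rw [pow_succ', mul_assoc, ih, blockOp_mul_blockOp, powMulCorner, pow_succ', pow_succ',
      mul_assoc, mul_assoc]

theorem summable_norm_blockOp_pow_mul_blockOp {A X D A' Y D' : H →L[ℂ] H} {ρ : ℝ} (hρ : ρ < 1)
    (hA : ‖A‖ ≤ ρ) (hD : Summable fun k => ‖D ^ k * D'‖) :
    Summable fun k => ‖blockOp A X 0 D ^ k * blockOp A' Y 0 D'‖ := by
  have hdiag : Summable fun k => ‖A ^ k * A'‖ :=
    summable_of_le_mul_add (b := 0) (fun _ => norm_nonneg _) (fun _ => le_rfl) summable_zero hρ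
      fun k => by
        rw [pow_succ', mul_assoc, Pi.zero_apply, add_zero]
        exact norm_mul_le_of_le hA le_rfl
  have hcorner : Summable fun k => ‖powMulCorner A X D Y D' k‖ :=
    summable_of_le_mul_add (fun _ => norm_nonneg _) (fun _ => by positivity) (hD.mul_left ‖X‖) hρ
      fun k => (norm_add_le _ _).trans (add_le_add (norm_mul_le_of_le hA le_rfl) (norm_mul_le _ _))
  refine .of_nonneg_of_le (fun _ => by positivity) (fun k => ?_) ((hdiag.add hcorner).add hD)
  rw [blockOp_pow_mul_blockOp]
  exact norm_blockOp_le _ _ _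

theorem exists_summable_norm_pow_one_sub_smul_mul_self_mul_blockOp [CompleteSpace H] {μ δ : ℝ}
    (X D : H →L[ℂ] H) [IsStarNormal D] (hδ : 0 < δ) (hδμ : δ ≤ |μ|)
    (hspec : ∀ w ∈ spectrum ℂ D, ∃ x : ℝ, w = x ∧ (x = 0 ∨ δ ≤ |x|)) :
    ∃ a : ℝ, Summable fun k =>
      ‖(1 - (a : ℂ) • (blockOp ((μ : ℂ) • 1) X 0 D * blockOp ((μ : ℂ) • 1) X 0 D)) ^ k *
        blockOp ((μ : ℂ) • 1) X 0 D‖ := by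
  set W := ‖D‖ + |μ|
  set a := (W ^ 2 + 1)⁻¹
  set ρ := 1 - a * δ ^ 2
  have ha : 0 < a := by positivity
  have haW : a * W ^ 2 ≤ 1 := inv_mul_le_one_of_le₀ (by linarith) (by positivity)
  have hμW : |μ| ≤ W := le_add_of_nonneg_left (norm_nonneg D)
  have hμρ : |1 - a * μ ^ 2| ≤ ρ := abs_one_sub_mul_sq_le ha.le haW hδ.le hδμ hμW
  have hρ : ρ < 1 := by linarith [mul_pos ha (pow_pos hδ 2)]
  refine ⟨a, ?_⟩
  rw [blockOp_mul_blockOp, smul_blockOp, ← blockOp_one, blockOp_sub_blockOp]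
  refine summable_norm_blockOp_pow_mul_blockOp hρ ?_ ?_
  · have hscalar : (1 : H →L[ℂ] H) - (a : ℂ) • ((μ : ℂ) • 1 * (μ : ℂ) • 1) =
        ((1 - a * μ ^ 2 : ℝ) : ℂ) • 1 := by
      rw [smul_mul_smul_comm, one_mul, smul_smul]
      push_cast
      rw [sub_smul, one_smul]
      ring_nf
    rw [hscalar, norm_smul, Complex.norm_real, Real.norm_eq_abs]
    exact (mul_le_of_le_one_right (abs_nonneg _) ContinuousLinearMap.norm_id_le).trans hμρ
  · refine .of_nonneg_of_le (fun _ => norm_nonneg _) (norm_pow_one_sub_smul_mul_self_mul_le ha.le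
      haW hδ.le (hδμ.trans hμW) (le_add_of_nonneg_right (abs_nonneg μ)) hspec) ?_
    exact (summable_geometric_of_lt_one ((abs_nonneg _).trans hμρ) hρ).mul_left W

end Block

theorem bai_for_A_lambda_sub_T_general
    {H : Type*} [NormedAddCommGroup H] [InnerProductSpace ℂ H] [CompleteSpace H]
    (l : ℕ → ℝ) (hpos : ∀ n, 0 < l n)
    (hlim : Tendsto l atTop (nhds 0))
    (N : H →L[ℂ] H) (hN : IsStarNormal N)
    (hspec : spectrum ℂ N = insert (0 : ℂ) (Set.range fun n => (l n : ℂ)))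
    (sqrtN : H →L[ℂ] H)
    (T : (H × H) →L[ℂ] (H × H)) (hT : T = blockOp 0 sqrtN 0 N)
    (n : ℕ) :
    ∃ (e : ℕ → ((H × H) →L[ℂ] (H × H))) (C : ℝ),
      (∀ k, ‖e k‖ ≤ C) ∧
      (∀ k, e k ∈ closure (Submodule.span ℂ
        {S : (H × H) →L[ℂ] (H × H) | ∃ m : ℕ, 1 ≤ m ∧ S = ((l n : ℂ) • 1 - T) ^ m} : Set _)) ∧
      (∀ a ∈ closure (Submodule.span ℂ
        {S : (H × H) →L[ℂ] (H × H) | ∃ m : ℕ, 1 ≤ m ∧ S = ((l n : ℂ) • 1 - T) ^ m} : Set _),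
        Tendsto (fun k => e k * a) atTop (nhds a)) := by
  set D : H →L[ℂ] H := (l n : ℂ) • 1 - N
  have : IsStarNormal D := ((Commute.one_left (star N)).smul_left (l n : ℂ)).isStarNormal_sub
  obtain ⟨δ, hδ, hδμ, hspecD⟩ :=
    exists_forall_spectrum_sub_eq_zero_or_le_abs hlim hspec (hpos n).ne'
  have hS : (l n : ℂ) • 1 - T = blockOp ((l n : ℂ) • 1) (-sqrtN) 0 D := by
    rw [hT, ← blockOp_one, smul_blockOp, blockOp_sub_blockOp, smul_zero, sub_zero, zero_sub]
  obtain ⟨a, ha⟩ :=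
    exists_summable_norm_pow_one_sub_smul_mul_self_mul_blockOp (-sqrtN) D hδ hδμ hspecD
  rw [← hS] at ha
  have hunit := exists_mem_closure_posPowSpan_mul_eq_self (𝕜 := ℂ) ((l n : ℂ) • 1 - T) (a : ℂ)
  obtain ⟨E, hEmem, hES⟩ := hunit ha
  refine ⟨fun _ => E, ‖E‖, fun _ => le_rfl, fun _ => hEmem, fun x hx => ?_⟩
  have hEx : E * x = x := mul_eq_self_of_mem_closure_posPowSpan (𝕜 := ℂ) hES hx
  simpa only [hEx] using tendsto_const_nhds

/-- For `T = [[0, N^{1/2}], [0, N]]` and each fixed `n`, the norm-closed algebra generated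
by the positive powers of `λₙ I − T` has a bounded approximate identity. -/
theorem bai_for_A_lambda_sub_T
    {H : Type*} [NormedAddCommGroup H] [InnerProductSpace ℂ H] [CompleteSpace H]
    (l : ℕ → ℝ) (hpos : ∀ n, 0 < l n)
    (hlim : Tendsto l atTop (nhds 0))
    (N : H →L[ℂ] H) (hN : IsStarNormal N)
    (hspec : spectrum ℂ N = insert (0 : ℂ) (Set.range fun n => (l n : ℂ)))
    (sqrtN : H →L[ℂ] H) (hsqrt : sqrtN = cfc (fun z : ℂ => z ^ (1/2 : ℂ)) N)
    (T : (H × H) →L[ℂ] (H × H)) (hT : T = blockOp 0 sqrtN 0 N)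
    (n : ℕ) :
    ∃ (e : ℕ → ((H × H) →L[ℂ] (H × H))) (C : ℝ),
      (∀ k, ‖e k‖ ≤ C) ∧
      (∀ k, e k ∈ closure (Submodule.span ℂ
        {S : (H × H) →L[ℂ] (H × H) | ∃ m : ℕ, 1 ≤ m ∧ S = ((l n : ℂ) • 1 - T) ^ m} : Set _)) ∧
      (∀ a ∈ closure (Submodule.span ℂ
        {S : (H × H) →L[ℂ] (H × H) | ∃ m : ℕ, 1 ≤ m ∧ S = ((l n : ℂ) • 1 - T) ^ m} : Set _),
        Tendsto (fun k => e k * a) atTop (nhds a)) :=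
  bai_for_A_lambda_sub_T_general l hpos hlim N hN hspec sqrtN T hT n
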